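/- arXiv:1904.08638 — 4 statements merged into one kernel-verified Lean document; each statement's English description precedes it below -/
import Mathlib

section
/- Let V be a finite-dimensional real vector space, L ⊆ V a full lattice (the ℤ-span of an ℝ-basis of V), and C̄ ⊆ V a convex cone (closed under addition and multiplication by positive real scalars). Set K := convexHull ℝ (C̄ ∩ L \ {0}). Let φ : V → ℝ be a nonzero linear functional and c ∈ ℝ with φ(x) ≥ c for all x ∈ K, set F := {x ∈ K : φ(x) = c}, and suppose the ℝ-linear span of F is all of V (so F is a facet of K whose cone σ = ℝ_{≥0}F is of maximal dimension). Then every nonzero lattice point of convexHull ℝ ({0} ∪ F) lies in F. -/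
/-!
Write a nonzero lattice point `v` of `convexHull ({0} ∪ F)` as `v = t • z` with `z ∈ F` and
`0 < t ≤ 1`. Since `C` is a convex cone, `v` is again a nonzero lattice point of `C`, so `v ∈ K`
and `c ≤ φ v = t * c`. The set of nonzero lattice points of `C` is stable under doubling, hence so
is `K`, which forces `c ≤ 2 * c`, i.e. `0 ≤ c`; together with `t ≤ 1` this gives `φ v = c`.
-/

open Pointwise

theorem smul_mem_convexHull_of_smul_subset {𝕜 E : Type*} [CommSemiring 𝕜] [PartialOrder 𝕜]
    [AddCommMonoid E] [Module 𝕜 E] {s : Set E} {a : 𝕜} (h : a • s ⊆ s) {x : E}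
    (hx : x ∈ convexHull 𝕜 s) : a • x ∈ convexHull 𝕜 s :=
  convexHull_mono h (convexHull_smul a s ▸ Set.smul_mem_smul_set hx)

section

variable {𝕜 E : Type*} [Field 𝕜] [LinearOrder 𝕜] [IsStrictOrderedRing 𝕜]
  [AddCommGroup E] [Module 𝕜 E]

theorem two_smul_inter_diff_zero_subset {C L : Set E}
    (hCsmul : ∀ t : 𝕜, 0 < t → ∀ x ∈ C, t • x ∈ C) (hLadd : ∀ x ∈ L, ∀ y ∈ L, x + y ∈ L) :
    (2 : 𝕜) • ((C ∩ L) \ {0}) ⊆ (C ∩ L) \ {0} := by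
  rintro _ ⟨p, ⟨⟨hpC, hpL⟩, hp0⟩, rfl⟩
  refine ⟨⟨hCsmul 2 two_pos p hpC, by simpa only [two_smul] using hLadd p hpL p hpL⟩, ?_⟩
  simpa [two_ne_zero] using hp0

theorem exists_pos_smul_eq_of_mem_convexHull_zero_union {F : Set E} (hF : Convex 𝕜 F) {v : E}
    (hv : v ∈ convexHull 𝕜 ({0} ∪ F)) (hv0 : v ≠ 0) :
    ∃ t : 𝕜, 0 < t ∧ t ≤ 1 ∧ ∃ z ∈ F, t • z = v := by
  rcases F.eq_empty_or_nonempty with rfl | hFne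
  · simp_all
  rw [Set.singleton_union, convexHull_insert hFne, hF.convexHull_eq,
    convexJoin_singleton_left] at hv
  obtain ⟨z, hz, hvz⟩ := Set.mem_iUnion₂.1 hv
  rw [segment_eq_image] at hvz
  obtain ⟨t, ⟨ht0, ht1⟩, rfl⟩ := hvz
  simp only [smul_zero, zero_add] at hv0 ⊢
  exact ⟨t, ht0.lt_of_ne (by rintro rfl; simp at hv0), ht1, z, hz, rfl⟩

theorem apply_smul_eq_of_two_smul_mem {K : Set E} {φ : E →ₗ[𝕜] 𝕜} {c : 𝕜}
    (hlb : ∀ x ∈ K, c ≤ φ x) {z : E} (h2z : (2 : 𝕜) • z ∈ K) (hzc : φ z = c)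
    {t : 𝕜} (ht : t ≤ 1) (htz : t • z ∈ K) : φ (t • z) = c := by
  have h2 := hlb _ h2z
  have ht' := hlb _ htz
  rw [map_smul, smul_eq_mul, hzc] at h2 ht' ⊢
  nlinarith

end

theorem lattice_points_of_facet_polytope_general
    {V : Type*} [AddCommGroup V] [Module ℝ V]
    (L : Set V)
    (hL : ∃ (ι : Type) (b : Module.Basis ι ℝ V),
      ∀ x : V, x ∈ L ↔ x ∈ Submodule.span ℤ (Set.range ⇑b))
    (C : Set V)
    (hCadd : ∀ x ∈ C, ∀ y ∈ C, x + y ∈ C)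
    (hCsmul : ∀ t : ℝ, 0 < t → ∀ x ∈ C, t • x ∈ C)
    (K : Set V) (hK : K = convexHull ℝ ((C ∩ L) \ {0}))
    (φ : V →ₗ[ℝ] ℝ) (c : ℝ) (hlb : ∀ x ∈ K, c ≤ φ x)
    (F : Set V) (hF : F = {x ∈ K | φ x = c}) :
    ∀ v : V, v ∈ L → v ∈ convexHull ℝ ({0} ∪ F) → v ≠ 0 → v ∈ F := by
  obtain ⟨ι, b, hLmem⟩ := hL
  have hLadd : ∀ x ∈ L, ∀ y ∈ L, x + y ∈ L := fun x hx y hy =>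
    (hLmem _).2 (add_mem ((hLmem x).1 hx) ((hLmem y).1 hy))
  let cone : ConvexCone ℝ V :=
    ⟨C, fun t ht x hx => hCsmul t ht x hx, fun x hx y hy => hCadd x hx y hy⟩
  have hKC : K ⊆ C := hK ▸ convexHull_min (fun p hp => hp.1.1) cone.convex
  have hKdouble : ∀ x ∈ K, (2 : ℝ) • x ∈ K := fun x hx => hK ▸
    smul_mem_convexHull_of_smul_subset (two_smul_inter_diff_zero_subset hCsmul hLadd) (hK ▸ hx)
  subst hF
  have hFconv : Convex ℝ {x ∈ K | φ x = c} :=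
    (hK ▸ convex_convexHull ℝ _ : Convex ℝ K).inter (convex_hyperplane φ.isLinear c)
  intro v hvL hv hv0
  obtain ⟨t, ht0, ht1, z, ⟨hzK, hzc⟩, rfl⟩ :=
    exists_pos_smul_eq_of_mem_convexHull_zero_union hFconv hv hv0
  have hvK : t • z ∈ K := hK ▸ subset_convexHull ℝ _ ⟨⟨hCsmul t ht0 z (hKC hzK), hvL⟩, hv0⟩
  exact ⟨hvK, apply_smul_eq_of_two_smul_mem hlb (hKdouble z hzK) hzc ht1 hvK⟩

/-- Let `L` be a full lattice in a finite-dimensional real vector space `V`,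
`C` a convex cone, `K` the convex hull of the nonzero lattice points of `C`,
and `F = {x ∈ K | φ x = c}` a facet of `K` cut out by a nonzero supporting
functional `φ`, whose linear span is all of `V`.  Then every nonzero lattice
point of `convexHull ℝ ({0} ∪ F)` lies in `F`. -/
theorem lattice_points_of_facet_polytope
    {V : Type*} [AddCommGroup V] [Module ℝ V] [FiniteDimensional ℝ V]
    (L : Set V)
    (hL : ∃ (ι : Type) (b : Module.Basis ι ℝ V),
      ∀ x : V, x ∈ L ↔ x ∈ Submodule.span ℤ (Set.range ⇑b))
    (C : Set V)
    (hCadd : ∀ x ∈ C, ∀ y ∈ C, x + y ∈ C)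
    (hCsmul : ∀ t : ℝ, 0 < t → ∀ x ∈ C, t • x ∈ C)
    (K : Set V) (hK : K = convexHull ℝ ((C ∩ L) \ {0}))
    (φ : V →ₗ[ℝ] ℝ) (hφ : φ ≠ 0) (c : ℝ) (hlb : ∀ x ∈ K, c ≤ φ x)
    (F : Set V) (hF : F = {x ∈ K | φ x = c})
    (hspan : Submodule.span ℝ F = ⊤) :
    ∀ v : V, v ∈ L → v ∈ convexHull ℝ ({0} ∪ F) → v ≠ 0 → v ∈ F :=
  lattice_points_of_facet_polytope_general L hL C hCadd hCsmul K hK φ c hlb F hF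
end

section
/- Let V be a finite-dimensional real vector space, L ⊆ V a full lattice (the ℤ-span of an ℝ-basis of V), and C ⊆ V an open set closed under multiplication by positive real scalars. Then for every x ∈ C there exists a positive integer n such that n • x belongs to convexHull ℝ (C ∩ L). -/
/-!
In the coordinates of a basis of `L`, every point is a convex combination of the integer
points of the unit cube around it (round each coordinate down or up), and these lie within a
fixed distance `R` of it. For `x ∈ C` with `ball x ε ⊆ C` and `n ε > R`, the cone property gives
`ball (n • x) (n ε) ⊆ C`, so the lattice points used for `n • x` all lie in `C`.
-/

open Set Metric Pointwise

theorem Pi.mem_convexHull_intPoints_dist_le_one {ι : Type*} [Fintype ι] (c : ι → ℝ) :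
    c ∈ convexHull ℝ {v : ι → ℝ | (∀ i, ∃ m : ℤ, (m : ℝ) = v i) ∧ dist v c ≤ 1} := by
  have hbox : c ∈ convexHull ℝ (univ.pi fun i => {(⌊c i⌋ : ℝ), (⌈c i⌉ : ℝ)}) :=
    mem_convexHull_pi fun i _ => by
      rw [convexHull_pair, segment_eq_Icc (mod_cast Int.floor_le_ceil (c i))]
      exact ⟨Int.floor_le _, Int.le_ceil _⟩
  refine convexHull_mono ?_ hbox
  intro v hv
  refine ⟨fun i => ?_, (dist_pi_le_iff zero_le_one).2 fun i => ?_⟩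
  · rcases hv i (mem_univ i) with h | h <;> exact ⟨_, h.symm⟩
  · rw [Real.dist_eq, abs_sub_le_iff]
    rcases hv i (mem_univ i) with h | h <;> rw [h] <;> constructor <;>
      linarith [Int.floor_le (c i), Int.sub_one_lt_floor (c i), Int.le_ceil (c i),
        Int.ceil_lt_add_one (c i)]

theorem Module.Basis.exists_forall_mem_convexHull_span_int_inter_closedBall
    {ι V : Type*} [Finite ι] [NormedAddCommGroup V] [NormedSpace ℝ V] (b : Module.Basis ι ℝ V) :
    ∃ R, ∀ y : V, y ∈ convexHull ℝ ((Submodule.span ℤ (range b) : Set V) ∩ closedBall y R) := by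
  have := Fintype.ofFinite ι
  let f : (ι → ℝ) →L[ℝ] V := LinearMap.toContinuousLinearMap b.equivFun.symm.toLinearMap
  refine ⟨‖f‖, fun y => ?_⟩
  have hfy : f (b.equivFun y) = y := b.equivFun.symm_apply_apply y
  have hy := mem_image_of_mem f (Pi.mem_convexHull_intPoints_dist_le_one (b.equivFun y))
  rw [hfy, ← ContinuousLinearMap.coe_coe, LinearMap.image_convexHull] at hy
  refine convexHull_mono ?_ hy
  rintro _ ⟨v, ⟨hv_int, hv_dist⟩, rfl⟩
  refine ⟨(b.mem_span_iff_repr_mem ℤ _).2 fun i => ?_, ?_⟩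
  · obtain ⟨m, hm⟩ := hv_int i
    rw [← b.equivFun_apply]
    exact ⟨m, hm.trans (congrFun (b.equivFun.apply_symm_apply v) i).symm⟩
  · rw [mem_closedBall, ← hfy]
    calc dist (f v) (f (b.equivFun y)) ≤ ‖f‖ * dist v (b.equivFun y) := f.dist_le_opNorm _ _
      _ ≤ ‖f‖ := mul_le_of_le_one_right (norm_nonneg f) hv_dist

/-- Let `L` be a full lattice in a finite-dimensional real vector space `V` and
`C` an open cone (an open set closed under multiplication by positive reals).
Then for every `x ∈ C` some positive integer multiple `n • x` lies in the
convex hull of the lattice points of `C`. -/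
theorem multiple_mem_convexHull_lattice_points_of_open_cone
    {V : Type*} [NormedAddCommGroup V] [NormedSpace ℝ V] [FiniteDimensional ℝ V]
    (L : Set V)
    (hL : ∃ (ι : Type) (b : Module.Basis ι ℝ V),
      ∀ x : V, x ∈ L ↔ x ∈ Submodule.span ℤ (Set.range ⇑b))
    (C : Set V) (hCopen : IsOpen C)
    (hCsmul : ∀ t : ℝ, 0 < t → ∀ x ∈ C, t • x ∈ C) :
    ∀ x ∈ C, ∃ n : ℕ, 0 < n ∧ (n : ℝ) • x ∈ convexHull ℝ (C ∩ L) := by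
  obtain ⟨ι, b, hLb⟩ := hL
  have := Module.Finite.finite_basis b
  obtain rfl : L = Submodule.span ℤ (range b) := Set.ext hLb
  obtain ⟨R, hR⟩ := b.exists_forall_mem_convexHull_span_int_inter_closedBall
  intro x hx
  obtain ⟨ε, hε, hball⟩ := Metric.isOpen_iff.mp hCopen x hx
  obtain ⟨n, hn⟩ := exists_nat_gt (max (R / ε) 0)
  have hn0 : (0 : ℝ) < n := (le_max_right _ _).trans_lt hn
  have hRn : R < n * ε := (div_lt_iff₀ hε).1 ((le_max_left _ _).trans_lt hn)
  have hcone : (n : ℝ) • ball x ε ⊆ C := by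
    rintro _ ⟨z, hz, rfl⟩
    exact hCsmul _ hn0 z (hball hz)
  rw [_root_.smul_ball hn0.ne', Real.norm_of_nonneg hn0.le] at hcone
  refine ⟨n, mod_cast hn0, convexHull_mono ?_ (hR ((n : ℝ) • x))⟩
  exact fun z ⟨hzL, hzR⟩ => ⟨hcone (closedBall_subset_ball hRn hzR), hzL⟩
end

section
/- Let N be a free ℤ-module of finite rank, v ∈ N a nonzero primitive element (i.e. the submodule ℤv is saturated in N: k·x ∈ ℤv for x ∈ N and a positive integer k implies x ∈ ℤv), and g an automorphism of N of finite order such that g(v) = m·v for some nonnegative integer m and such that m' ∘ g = m' for every ℤ-linear functional m' : N → ℤ vanishing on v. Then g = id. -/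
/-!
From `g v = m • v` and `g ^ n = 1` we get `m ^ n = 1`, so `g` fixes `v`. Since `ℤ ∙ v` is
saturated, `N ⧸ ℤ ∙ v` is free, so the functionals vanishing on `v` separate it; hence
`g x - x ∈ ℤ ∙ v` is fixed by `g`, giving `(g ^ k) x = x + k • (g x - x)`, and `g ^ n = 1` in a
torsion-free group forces `g x = x`.
-/

namespace LinearEquiv

variable {R M : Type*} [Semiring R] [AddCommGroup M] [Module R M]

theorem pow_apply_of_apply_eq_nsmul {g : M ≃ₗ[R] M} {v : M} {m : ℕ} (hgv : g v = m • v)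
    (k : ℕ) : (g ^ k) v = m ^ k • v := by
  induction k with
  | zero => simp
  | succ k ih => rw [pow_succ', mul_apply, ih, map_nsmul, hgv, smul_smul, ← pow_succ]

theorem pow_apply_eq_add_nsmul {g : M ≃ₗ[R] M} {x : M} (hfix : g (g x - x) = g x - x)
    (k : ℕ) : (g ^ k) x = x + k • (g x - x) := by
  induction k with
  | zero => simp
  | succ k ih =>
    rw [pow_succ', mul_apply, ih, map_add, map_nsmul, hfix, succ_nsmul']
    abel

variable [IsAddTorsionFree M]

theorem eq_one_of_apply_eq_nsmul_of_pow_eq_one {g : M ≃ₗ[R] M} {v : M} (hv : v ≠ 0) {m n : ℕ}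
    (hn : n ≠ 0) (hg : g ^ n = 1) (hgv : g v = m • v) : m = 1 := by
  have hmn : ((m ^ n : ℕ) : ℤ) • v = (1 : ℤ) • v := by
    rw [natCast_zsmul, one_smul, ← pow_apply_of_apply_eq_nsmul hgv, hg, coe_one, id]
  exact (pow_eq_one_iff_left hn).mp (by exact_mod_cast smul_left_injective ℤ hv hmn)

theorem eq_one_of_pow_eq_one_of_forall_apply_sub_fixed {g : M ≃ₗ[R] M} {n : ℕ} (hn : n ≠ 0)
    (hg : g ^ n = 1) (hfix : ∀ x, g (g x - x) = g x - x) : g = 1 := by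
  ext x
  have hnx : n • (g x - x) = 0 := by
    simpa [hg] using (pow_apply_eq_add_nsmul (hfix x) n).symm
  exact sub_eq_zero.mp ((nsmul_eq_zero_iff_right hn).mp hnx)

end LinearEquiv

namespace Submodule

theorem isAddTorsionFree_quotient_of_nsmul_mem {M : Type*} [AddCommGroup M] {S : Submodule ℤ M}
    (hS : ∀ (x : M) (k : ℕ), 0 < k → k • x ∈ S → x ∈ S) : IsAddTorsionFree (M ⧸ S) where
  nsmul_right_injective k hk := by
    rintro ⟨x⟩ ⟨y⟩ hxy
    simp only [Quotient.quot_mk_eq_mk, ← Quotient.mk_smul, Quotient.eq] at hxy ⊢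
    exact hS _ k (Nat.pos_of_ne_zero hk) (by rwa [nsmul_sub])

theorem mem_of_forall_dual_eq_zero {R M : Type*} [CommRing R] [IsDomain R]
    [IsPrincipalIdealRing R] [AddCommGroup M] [Module R M] [Module.Finite R M] {S : Submodule R M}
    [Module.IsTorsionFree R (M ⧸ S)] {x : M}
    (hx : ∀ φ : Module.Dual R M, S ≤ LinearMap.ker φ → φ x = 0) : x ∈ S := by
  rw [← Quotient.mk_eq_zero, ← Module.forall_dual_apply_eq_zero_iff R]
  exact fun φ ↦ hx (φ ∘ₗ S.mkQ) fun y hy ↦ by simp [(Quotient.mk_eq_zero S).mpr hy]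

end Submodule

/-- Let `N` be a free `ℤ`-module of finite rank, `v ∈ N` a nonzero primitive
element, and `g` a finite-order automorphism of `N` sending `v` to a
nonnegative multiple of itself and fixing every linear functional vanishing
on `v`.  Then `g = 1`. -/
theorem aut_fixing_ray_and_its_annihilator_eq_one
    {N : Type*} [AddCommGroup N] [Module.Free ℤ N] [Module.Finite ℤ N]
    (v : N) (hv0 : v ≠ 0)
    (hprim : ∀ (x : N) (k : ℕ), 0 < k → k • x ∈ Submodule.span ℤ {v} →
      x ∈ Submodule.span ℤ {v})
    (g : N ≃ₗ[ℤ] N) (n : ℕ) (hn : 0 < n) (hfin : g ^ n = 1)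
    (m : ℕ) (hgv : g v = m • v)
    (hfix : ∀ m' : N →ₗ[ℤ] ℤ, m' v = 0 → m' ∘ₗ (g : N →ₗ[ℤ] N) = m') :
    g = 1 := by
  have := IsAddTorsionFree.of_isTorsionFree ℤ N
  have := Submodule.isAddTorsionFree_quotient_of_nsmul_mem hprim
  have hgv' : g v = v := by
    rw [hgv, g.eq_one_of_apply_eq_nsmul_of_pow_eq_one hv0 hn.ne' hfin hgv, one_smul]
  refine g.eq_one_of_pow_eq_one_of_forall_apply_sub_fixed hn.ne' hfin fun x ↦ ?_
  have hx : g x - x ∈ Submodule.span ℤ {v} := by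
    refine Submodule.mem_of_forall_dual_eq_zero fun φ hφ ↦ ?_
    have hφg := LinearMap.congr_fun (hfix φ (hφ (Submodule.mem_span_singleton_self v))) x
    simpa [sub_eq_zero] using hφg
  obtain ⟨c, hc⟩ := Submodule.mem_span_singleton.mp hx
  rw [← hc, map_zsmul, hgv']
end

section
/- Let L be a free ℤ-module of finite rank equipped with a symmetric ℤ-bilinear form B, and let r be a ℤ-linear automorphism of L preserving B (i.e. B(r x, r y) = B(x, y) for all x, y) with r² = id, whose fixed submodule H := {x ∈ L : r(x) = x} satisfies that L/H has rank at most 1. Let e ∈ L be an isotropic element (B(e, e) = 0) with r(e) = e or r(e) = −e, and set e^⊥ := {x ∈ L : B(x, e) = 0}. Then: r maps e^⊥ to itself and maps ℤe to itself, hence induces an automorphism r̄ of the quotient module e^⊥/ℤe; r̄² = id; r̄ fixes pointwise the image of H ∩ e^⊥ in e^⊥/ℤe; and the quotient of e^⊥/ℤe by this image has rank at most 1. -/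
/-!
Since `r e = ±e` and `r` is an isometry, `r` preserves both `e^⊥` and `ℤe`, so it descends to an
involution of `e^⊥/ℤe` that fixes the image of `H ∩ e^⊥`. For the rank bound, `e^⊥/(H ∩ e^⊥)`
embeds into `L/H`, and the quotient of `e^⊥/ℤe` by the image of `H ∩ e^⊥` is a quotient of
`e^⊥/(H ∩ e^⊥)`.
-/

open Submodule

theorem apply_eq_zero_of_isometry_of_eq_or_eq_neg {R M N : Type*} [CommRing R]
    [AddCommGroup M] [Module R M] [AddCommGroup N] [Module R N] (B : M →ₗ[R] M →ₗ[R] N)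
    {r : M →ₗ[R] M} (hrB : ∀ x y, B (r x) (r y) = B x y) {e : M}
    (hre : r e = e ∨ r e = -e) {x : M} (hx : B x e = 0) : B (r x) e = 0 := by
  rcases hre with h | h
  · rw [← h, hrB, hx]
  · rw [← neg_eq_zero, ← map_neg, ← h, hrB, hx]

section

variable {R M : Type*} [Ring R] [AddCommGroup M] [Module R M]

theorem Submodule.rank_quotient_comap_subtype_le (H P : Submodule R M) :
    Module.rank R (P ⧸ H.comap P.subtype) ≤ Module.rank R (M ⧸ H) := by
  refine LinearMap.rank_le_of_injective ((H.comap P.subtype).liftQ (H.mkQ ∘ₗ P.subtype) ?_) ?_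
  · simp [LinearMap.ker_comp]
  · rw [← LinearMap.ker_eq_bot]
    exact ker_liftQ_eq_bot _ _ _ (by simp [LinearMap.ker_comp])

theorem Submodule.rank_quotient_map_mkQ_le (Z K : Submodule R M) :
    Module.rank R ((M ⧸ Z) ⧸ K.map Z.mkQ) ≤ Module.rank R (M ⧸ K) := by
  refine LinearMap.rank_le_of_surjective (K.mapQ (K.map Z.mkQ) Z.mkQ (le_comap_map _ _)) ?_
  rw [← LinearMap.range_eq_top, range_mapQ, range_mkQ, Submodule.map_top, range_mkQ]

theorem apply_mem_span_singleton_of_eq_or_eq_neg {r : M →ₗ[R] M} {e : M}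
    (hre : r e = e ∨ r e = -e) {x : M} (hx : x ∈ span R {e}) : r x ∈ span R {e} := by
  have hre_mem : r e ∈ span R {e} := by
    rcases hre with h | h <;> rw [h]
    · exact mem_span_singleton_self e
    · exact neg_mem (mem_span_singleton_self e)
  exact (span_singleton_le_iff_mem e ((span R {e}).comap r)).2 hre_mem hx

theorem Submodule.mapQ_restrict_involutive {r : M →ₗ[R] M} (hr : ∀ x, r (r x) = x)
    {P : Submodule R M} (hrP : ∀ x ∈ P, r x ∈ P) (Z : Submodule R P)
    (hrZ : Z ≤ Z.comap (r.restrict hrP)) :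
    Function.Involutive (Z.mapQ Z (r.restrict hrP) hrZ) := by
  intro q
  induction q using Quotient.induction_on with
  | H x => exact congrArg _ (Subtype.ext (hr x))

def Submodule.quotientInvolution (r : M →ₗ[R] M) (hr : ∀ x, r (r x) = x) {P : Submodule R M}
    (hrP : ∀ x ∈ P, r x ∈ P) (Z : Submodule R P) (hrZ : Z ≤ Z.comap (r.restrict hrP)) :
    (P ⧸ Z) ≃ₗ[R] (P ⧸ Z) :=
  LinearEquiv.ofInvolutive _ (mapQ_restrict_involutive hr hrP Z hrZ)

theorem Submodule.quotientInvolution_mk (r : M →ₗ[R] M) (hr : ∀ x, r (r x) = x)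
    {P : Submodule R M} (hrP : ∀ x ∈ P, r x ∈ P) (Z : Submodule R P)
    (hrZ : Z ≤ Z.comap (r.restrict hrP)) (x : M) (hx : x ∈ P) :
    quotientInvolution r hr hrP Z hrZ (Quotient.mk ⟨x, hx⟩) = Quotient.mk ⟨r x, hrP x hx⟩ :=
  rfl

end

theorem reflection_induces_reflection_on_isotropic_quotient_general
    {L : Type*} [AddCommGroup L]
    (B : L →ₗ[ℤ] L →ₗ[ℤ] ℤ)
    (r : L ≃ₗ[ℤ] L) (hrB : ∀ x y : L, B (r x) (r y) = B x y)
    (hr2 : ∀ x : L, r (r x) = x)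
    (H : Submodule ℤ L) (hH : ∀ x : L, x ∈ H ↔ r x = x)
    (hHrank : Module.rank ℤ (L ⧸ H) ≤ 1)
    (e : L) (hre : r e = e ∨ r e = -e)
    (P : Submodule ℤ L) (hP : ∀ x : L, x ∈ P ↔ B x e = 0)
    (Z : Submodule ℤ P) (hZ : Z = (Submodule.span ℤ {e}).comap P.subtype) :
    (∀ x ∈ P, r x ∈ P) ∧
    (∀ x ∈ Submodule.span ℤ {e}, r x ∈ Submodule.span ℤ {e}) ∧
    ∃ rbar : (P ⧸ Z) ≃ₗ[ℤ] (P ⧸ Z),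
      (∀ (x : L) (hx : x ∈ P) (hrx : r x ∈ P),
        rbar (Submodule.Quotient.mk ⟨x, hx⟩) = Submodule.Quotient.mk ⟨r x, hrx⟩) ∧
      (∀ q : P ⧸ Z, rbar (rbar q) = q) ∧
      (∀ (x : L) (hx : x ∈ P), x ∈ H →
        rbar (Submodule.Quotient.mk ⟨x, hx⟩) = Submodule.Quotient.mk ⟨x, hx⟩) ∧
      Module.rank ℤ ((P ⧸ Z) ⧸ Submodule.map Z.mkQ (H.comap P.subtype)) ≤ 1 := by
  have hrP : ∀ x ∈ P, r x ∈ P := fun x hx =>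
    (hP _).2 <|
      apply_eq_zero_of_isometry_of_eq_or_eq_neg B (r := r.toLinearMap) hrB hre ((hP x).1 hx)
  have hrS : ∀ x ∈ span ℤ {e}, r x ∈ span ℤ {e} := fun _ =>
    apply_mem_span_singleton_of_eq_or_eq_neg (r := r.toLinearMap) hre
  have hrZ : Z ≤ Z.comap (r.toLinearMap.restrict hrP) := by
    subst hZ
    exact fun z hz => hrS z hz
  refine ⟨hrP, hrS, quotientInvolution r.toLinearMap hr2 hrP Z hrZ,
    fun x hx _ => quotientInvolution_mk _ hr2 hrP Z hrZ x hx,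
    mapQ_restrict_involutive hr2 hrP Z hrZ, fun x hx hxH => ?_, ?_⟩
  · rw [quotientInvolution_mk _ hr2 hrP Z hrZ x hx]
    exact congrArg _ (Subtype.ext ((hH x).1 hxH))
  · exact (rank_quotient_map_mkQ_le Z _).trans
      ((rank_quotient_comap_subtype_le H P).trans hHrank)

/-- A reflection `r` of an even lattice `(L, B)` fixing an isotropic vector `e`
up to sign induces a reflection `r̄` on the quotient lattice `e^⊥ / ℤe`:
`r` preserves `e^⊥` and `ℤe`, the induced map `r̄` has order at most `2`, it
fixes pointwise the image of `H ∩ e^⊥` (where `H` is the fixed lattice of `r`,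
of corank at most `1`), and the quotient of `e^⊥ / ℤe` by this image has rank
at most `1`. -/
theorem reflection_induces_reflection_on_isotropic_quotient
    {L : Type*} [AddCommGroup L] [Module.Free ℤ L] [Module.Finite ℤ L]
    (B : L →ₗ[ℤ] L →ₗ[ℤ] ℤ) (hBsymm : ∀ x y : L, B x y = B y x)
    (r : L ≃ₗ[ℤ] L) (hrB : ∀ x y : L, B (r x) (r y) = B x y)
    (hr2 : ∀ x : L, r (r x) = x)
    (H : Submodule ℤ L) (hH : ∀ x : L, x ∈ H ↔ r x = x)
    (hHrank : Module.rank ℤ (L ⧸ H) ≤ 1)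
    (e : L) (he : B e e = 0) (hre : r e = e ∨ r e = -e)
    (P : Submodule ℤ L) (hP : ∀ x : L, x ∈ P ↔ B x e = 0)
    (Z : Submodule ℤ P) (hZ : Z = (Submodule.span ℤ {e}).comap P.subtype) :
    (∀ x ∈ P, r x ∈ P) ∧
    (∀ x ∈ Submodule.span ℤ {e}, r x ∈ Submodule.span ℤ {e}) ∧
    ∃ rbar : (P ⧸ Z) ≃ₗ[ℤ] (P ⧸ Z),
      (∀ (x : L) (hx : x ∈ P) (hrx : r x ∈ P),
        rbar (Submodule.Quotient.mk ⟨x, hx⟩) = Submodule.Quotient.mk ⟨r x, hrx⟩) ∧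
      (∀ q : P ⧸ Z, rbar (rbar q) = q) ∧
      (∀ (x : L) (hx : x ∈ P), x ∈ H →
        rbar (Submodule.Quotient.mk ⟨x, hx⟩) = Submodule.Quotient.mk ⟨x, hx⟩) ∧
      Module.rank ℤ ((P ⧸ Z) ⧸ Submodule.map Z.mkQ (H.comap P.subtype)) ≤ 1 :=
  reflection_induces_reflection_on_isotropic_quotient_general B r hrB hr2 H hH hHrank e hre P hP Z
    hZ
end
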